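/- Let T ∈ B(H) satisfy (T − t_N)^{k_N} ⋯ (T − t_1)^{k_1} = 0 with t_1, …, t_N distinct. Then the orthogonal projection onto L_1 = ker (T − t_1)^{k_1} belongs to the unital C*-algebra C*(T, 1) generated by T. -/

import Mathlib

variable {H : Type*} [NormedAddCommGroup H] [InnerProductSpace ℂ H] [CompleteSpace H]

/-- The orthogonal projection of `H` onto a closed subspace `K`, as an element of `B(H)`. -/
noncomputable def orthProjOnto (K : Submodule ℂ H) (hK : IsClosed (K : Set H)) :
    H →L[ℂ] H :=
  haveI : CompleteSpace K := hK.completeSpace_coe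
  K.subtypeL.comp K.orthogonalProjectionOnto

/-!
With `q = (X - t₀)^{k₀}` and `r = ∏_{i ≠ 0} (X - tᵢ)^{kᵢ}` coprime, a Bézout identity
`a q + b r = 1` together with `q(T) r(T) = 0` makes `e = (b r)(T)` an idempotent polynomial in `T`
whose range is `ker q(T)`. Kaplansky's formula `P = e (e + e* - 1)⁻¹` turns an idempotent of a
C⋆-algebra into the self-adjoint projection with the same range, and `P` stays in `C*(T, 1)`
because closed ⋆-subalgebras are closed under inversion (spectral permanence).
-/

open Polynomial
open scoped Ring

section RangeProjection

variable {R : Type*} [Ring R] [StarRing R] {e : R}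

/-- Kaplansky's formula; `e + star e - 1` is invertible whenever `e` is an idempotent of a
C⋆-algebra, and `Ring.inverse` is `0` on non-units. -/
noncomputable def rangeProjection (e : R) : R := e * (e + star e - 1)⁻¹ʳ

lemma add_star_sub_one_mul_of_isIdempotentElem (he : IsIdempotentElem e) :
    (e + star e - 1) * e = star e * e := by
  simp only [sub_mul, add_mul, he.eq, one_mul]
  abel

lemma star_mul_add_star_sub_one_of_isIdempotentElem (he : IsIdempotentElem e) :
    star e * (e + star e - 1) = star e * e := by
  simp only [mul_sub, mul_add, he.star.eq, mul_one]
  abel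

lemma mul_inverse_add_star_sub_one_of_isIdempotentElem (he : IsIdempotentElem e)
    (hs : IsUnit (e + star e - 1)) :
    e * (e + star e - 1)⁻¹ʳ = (e + star e - 1)⁻¹ʳ * star e := by
  set s := e + star e - 1
  calc e * s⁻¹ʳ = s⁻¹ʳ * (s * e) * s⁻¹ʳ := by
        rw [← mul_assoc, Ring.inverse_mul_cancel _ hs, one_mul]
    _ = s⁻¹ʳ * star e := by
        rw [add_star_sub_one_mul_of_isIdempotentElem he,
          ← star_mul_add_star_sub_one_of_isIdempotentElem he, mul_assoc, mul_assoc,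
          Ring.mul_inverse_cancel _ hs, mul_one]

lemma rangeProjection_mul_self (he : IsIdempotentElem e)
    (hs : IsUnit (e + star e - 1)) : rangeProjection e * e = e := by
  rw [rangeProjection, mul_inverse_add_star_sub_one_of_isIdempotentElem he hs, mul_assoc,
    ← add_star_sub_one_mul_of_isIdempotentElem he, ← mul_assoc, Ring.inverse_mul_cancel _ hs,
    one_mul]

lemma mul_rangeProjection (he : IsIdempotentElem e) :
    e * rangeProjection e = rangeProjection e := by
  rw [rangeProjection, ← mul_assoc, he.eq]

lemma isStarProjection_rangeProjection (he : IsIdempotentElem e)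
    (hs : IsUnit (e + star e - 1)) : IsStarProjection (rangeProjection e) where
  isIdempotentElem := by
    rw [IsIdempotentElem]
    nth_rw 2 [rangeProjection]
    rw [← mul_assoc, rangeProjection_mul_self he hs, rangeProjection]
  isSelfAdjoint := by
    have hs_sa : IsSelfAdjoint (e + star e - 1) := by
      simp only [isSelfAdjoint_iff, star_sub, star_add, star_star, star_one, add_comm]
    rw [isSelfAdjoint_iff, rangeProjection, star_mul, hs_sa.ringInverse.star_eq,
      mul_inverse_add_star_sub_one_of_isIdempotentElem he hs]

end RangeProjection

section CStarAlgebra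

variable {A : Type*} [CStarAlgebra A]

lemma isUnit_one_add_star_mul_self [PartialOrder A] [StarOrderedRing A] (d : A) :
    IsUnit (1 + star d * d) :=
  CStarAlgebra.isUnit_of_le 1 (le_add_of_nonneg_right (star_mul_self_nonneg d))

lemma isUnit_add_star_sub_one_of_isIdempotentElem [PartialOrder A] [StarOrderedRing A] {e : A}
    (he : IsIdempotentElem e) : IsUnit (e + star e - 1) := by
  have hsq : (e + star e - 1) * (e + star e - 1) = 1 + star (e - star e) * (e - star e) := by
    simp only [star_sub, star_star, mul_sub, sub_mul, mul_add, add_mul, he.eq, he.star.eq,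
      one_mul, mul_one]
    abel
  have := hsq ▸ isUnit_one_add_star_mul_self (e - star e)
  exact ((Commute.refl _).isUnit_mul_iff.mp this).1

lemma StarSubalgebra.ringInverse_mem (S : StarSubalgebra ℂ A) [IsClosed (S : Set A)] {a : A}
    (ha : a ∈ S) : a⁻¹ʳ ∈ S := by
  by_cases h : IsUnit a
  · obtain ⟨u, hu⟩ := (S.coe_isUnit (a := ⟨a, ha⟩)).mp h
    have hu_inv : a * ((u⁻¹ : Sˣ) : S) = 1 := by
      simpa [hu] using congrArg Subtype.val u.mul_inv
    have : a⁻¹ʳ = ((u⁻¹ : Sˣ) : S) := by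
      rw [← Ring.inverse_mul_cancel_left a ((u⁻¹ : Sˣ) : S) h, hu_inv, mul_one]
    rw [this]
    exact SetLike.coe_mem _
  · rw [Ring.inverse_non_unit _ h]
    exact zero_mem S

lemma StarSubalgebra.rangeProjection_mem (S : StarSubalgebra ℂ A) [IsClosed (S : Set A)] {e : A}
    (he : e ∈ S) : rangeProjection e ∈ S :=
  mul_mem he (S.ringInverse_mem (sub_mem (add_mem he (star_mem he)) (one_mem S)))

end CStarAlgebra

lemma ContinuousLinearMap.range_eq_of_mul_eq {R M : Type*} [Semiring R] [AddCommMonoid M]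
    [Module R M] [TopologicalSpace M] {p e : M →L[R] M} (hpe : p * e = e) (hep : e * p = p) :
    p.range = e.range := by
  apply le_antisymm
  · rw [← hep]; exact LinearMap.range_comp_le_range _ _
  · rw [← hpe]; exact LinearMap.range_comp_le_range _ _

lemma ContinuousLinearMap.ker_eq_range_of_add_eq_one {R M : Type*} [Semiring R]
    [AddCommMonoid M] [Module R M] [TopologicalSpace M] [ContinuousAdd M] {a q e : M →L[R] M}
    (hqe : q * e = 0) (h : a * q + e = 1) :
    LinearMap.ker (q : M →ₗ[R] M) = e.range := by
  apply le_antisymm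
  · intro x hx
    refine ⟨x, ?_⟩
    have hqx : q x = 0 := hx
    simpa [hqx] using congrArg (· x) h
  · rintro _ ⟨x, rfl⟩
    exact congrArg (· x) hqe

lemma orthProjOnto_eq_of_isStarProjection {P : H →L[ℂ] H} (hP : IsStarProjection P)
    {K : Submodule ℂ H} (hK : IsClosed (K : Set H)) (hPK : P.range = K) :
    orthProjOnto K hK = P := by
  obtain ⟨_, hP⟩ := isStarProjection_iff_eq_starProjection_range.mp hP
  subst hPK
  conv_rhs => rw [hP]
  rfl

lemma orthProjOnto_eq_rangeProjection {e : H →L[ℂ] H} (he : IsIdempotentElem e)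
    {K : Submodule ℂ H} (hK : IsClosed (K : Set H)) (heK : e.range = K) :
    orthProjOnto K hK = rangeProjection e :=
  have hs := isUnit_add_star_sub_one_of_isIdempotentElem he
  orthProjOnto_eq_of_isStarProjection (isStarProjection_rangeProjection he hs) hK <|
    (ContinuousLinearMap.range_eq_of_mul_eq (rangeProjection_mul_self he hs)
      (mul_rangeProjection he)).trans heK

lemma isIdempotentElem_aeval_of_add_eq_one {R A : Type*} [CommRing R] [Ring A] [Algebra R A]
    {x : A} {a b q r : R[X]} (hab : a * q + b * r = 1) (hqr : aeval x (q * r) = 0) :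
    IsIdempotentElem (aeval x (b * r)) := by
  have : b * r * (b * r) = b * r - a * b * (q * r) := by linear_combination (b * r) * hab
  rw [IsIdempotentElem, ← map_mul, this, map_sub, map_mul _ (a * b), hqr, mul_zero, sub_zero]

lemma isCoprime_pow_X_sub_C_prod {K ι : Type*} [Field K] {t : ι → K}
    (ht : Function.Injective t) (k : ι → ℕ) {i : ι} {s : Finset ι} (hi : i ∉ s) :
    IsCoprime ((X - C (t i)) ^ k i) (∏ j ∈ s, (X - C (t j)) ^ k j) :=
  IsCoprime.prod_right fun _ hj =>
    (pairwise_coprime_X_sub_C ht (ne_of_mem_of_not_mem hj hi).symm).pow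

lemma ker_aeval_eq_range_aeval_of_add_eq_one {𝕜 E : Type*} [NormedField 𝕜]
    [NormedAddCommGroup E] [NormedSpace 𝕜 E] {T : E →L[𝕜] E} {a b q r : 𝕜[X]}
    (hab : a * q + b * r = 1) (hqr : aeval T (q * r) = 0) :
    LinearMap.ker (aeval T q : E →ₗ[𝕜] E) = (aeval T (b * r)).range :=
  ContinuousLinearMap.ker_eq_range_of_add_eq_one (a := aeval T a)
    (by rw [← map_mul, mul_left_comm, map_mul, hqr, mul_zero])
    (by rw [← map_mul, ← map_add, hab, map_one])

lemma aeval_mem_starAlgebra_adjoin_singleton {R A : Type*} [CommSemiring R] [StarRing R]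
    [Semiring A] [StarRing A] [Algebra R A] [StarModule R A] (x : A) (p : R[X]) :
    aeval x p ∈ StarAlgebra.adjoin R {x} :=
  Algebra.adjoin_mono Set.subset_union_left (aeval_mem_adjoin_singleton R x)

/-- Let `T ∈ B(H)` satisfy `(T - t_N)^{k_N} ⋯ (T - t_0)^{k_0} = 0` with the `t i`
distinct and `k i ≥ 1`.  Then the orthogonal projection onto
`L₁ = ker (T - t_0)^{k_0}` belongs to the unital C*-algebra `C*(T, 1)` generated by
`T`, i.e. the norm closure of the unital *-subalgebra generated by `T`. -/
theorem orthogonalProjection_mem_elementalStarAlgebra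
    {N : ℕ} (t : Fin (N + 1) → ℂ) (ht : Function.Injective t)
    (k : Fin (N + 1) → ℕ)
    (T : H →L[ℂ] H)
    (hT : (List.ofFn fun i : Fin (N + 1) => (T - t i • (1 : H →L[ℂ] H)) ^ k i).prod = 0) :
    orthProjOnto (LinearMap.ker ((T - t 0 • (1 : H →L[ℂ] H)) ^ k 0))
        (by exact ContinuousLinearMap.isClosed_ker ((T - t 0 • (1 : H →L[ℂ] H)) ^ k 0)) ∈
      (StarAlgebra.adjoin ℂ ({T} : Set (H →L[ℂ] H))).topologicalClosure := by
  set p : Fin (N + 1) → ℂ[X] := fun i => (X - C (t i)) ^ k i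
  have hp (i) : (T - t i • (1 : H →L[ℂ] H)) ^ k i = aeval T (p i) := by
    simp [p, Algebra.algebraMap_eq_smul_one]
  have hqr : aeval T (p 0 * ∏ i ∈ Finset.univ.erase 0, p i) = 0 := by
    rw [Finset.mul_prod_erase _ _ (Finset.mem_univ 0), ← List.prod_ofFn, map_list_prod,
      List.map_ofFn]
    simpa [hp] using hT
  obtain ⟨a, b, hab⟩ := isCoprime_pow_X_sub_C_prod ht k (Finset.notMem_erase 0 Finset.univ)
  rw [orthProjOnto_eq_rangeProjection (isIdempotentElem_aeval_of_add_eq_one hab hqr) _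
    (by rw [hp 0, ker_aeval_eq_range_aeval_of_add_eq_one hab hqr])]
  have := (StarAlgebra.adjoin ℂ {T}).isClosed_topologicalClosure
  exact StarSubalgebra.rangeProjection_mem _ <|
    StarSubalgebra.le_topologicalClosure _ (aeval_mem_starAlgebra_adjoin_singleton T _)
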